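/- Let F = T[a..b] and F' = T[a'..b'] (a < a') be neighboring runs with equal period p and equal Lyndon roots, with δ defined as the residue mod p of the difference of their Lyndon positions. Then the set of layers R = T[x..y] of the pyramid P(F,F') with a < x and y < b' is exactly { T[a'-kp-δ .. b+kp+δ] : k ≥ 4, a'-kp-δ > a, b+kp+δ < b' }, and each such layer has period kp + δ. -/

import Mathlib

open List

variable {α : Type*}

/-- `frag T a b` is the fragment `T[a..b]` (inclusive, 0-based). -/
def frag (T : List α) (a b : ℕ) : List α := (T.drop a).take (b + 1 - a)

/-- `p` is a period of `S`: `0 < p ≤ |S|` and `S[i] = S[i+p]` for all valid `i`. -/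
def IsPeriodOf (p : ℕ) (S : List α) : Prop :=
  0 < p ∧ p ≤ S.length ∧ ∀ i : ℕ, i + p < S.length → S[i]? = S[i + p]?

/-- The smallest period of `S`. -/
noncomputable def minPeriod (S : List α) : ℕ := sInf {p | IsPeriodOf p S}

/-- `T[a..b]` is a run: periodic (its smallest period occurs at least twice)
and maximal on both sides. -/
def IsRun (T : List α) (a b : ℕ) : Prop :=
  a ≤ b ∧ b < T.length ∧
  2 * minPeriod (frag T a b) ≤ b + 1 - a ∧
  (a = 0 ∨ T[a - 1]? ≠ T[a - 1 + minPeriod (frag T a b)]?) ∧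
  (b = T.length - 1 ∨ T[b + 1]? ≠ T[b + 1 - minPeriod (frag T a b)]?)

/-- `W` occurs in `T` at position `s`. -/
def OccursAt (T : List α) (s : ℕ) (W : List α) : Prop :=
  s + W.length ≤ T.length ∧ (T.drop s).take W.length = W

/-- The set of distinct square substrings of `T`. -/
def Squares (T : List α) : Set (List α) :=
  {W | ∃ X : List α, X ≠ [] ∧ W = X ++ X ∧ W <:+: T}

/-- A non-empty string is primitive if it is not a proper power. -/
def Primitive (U : List α) : Prop :=
  U ≠ [] ∧ ∀ (V : List α) (k : ℕ), U = (List.replicate k V).flatten → k = 1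

/-- Cyclic rotation moving the first `c` characters to the end. -/
def rot (c : ℕ) (L : List α) : List α := L.drop c ++ L.take c

/-- `lam` is the Lyndon root of a periodic string `S`: the lexicographically
smallest rotation of `S[0..per(S))`. -/
def LyndonRootOf [LinearOrder α] (S lam : List α) : Prop :=
  (∃ c < minPeriod S, lam = rot c (S.take (minPeriod S))) ∧
  ∀ c < minPeriod S, lam ≤ rot c (S.take (minPeriod S))

/-- Squares generated by a periodic string `U`: squares contained in `U`
whose smallest period equals that of `U`. -/
def FragSquares (U : List α) : Set (List α) :=
  {W | ∃ X : List α, X ≠ [] ∧ W = X ++ X ∧ W <:+: U ∧ minPeriod W = minPeriod U}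

/-- `subper U`: the minimum of `per(X)` over squares `X²` generated by `U`. -/
noncomputable def subper (U : List α) : ℕ :=
  sInf {q | ∃ X : List α, X ≠ [] ∧ (X ++ X) <:+: U ∧
    minPeriod (X ++ X) = minPeriod U ∧ minPeriod X = q}

/-- Fragments `[a..b]` and `[a'..b']` are neighboring:
`[a-1..b+1] ∩ [a'..b'] ≠ ∅`. -/
def Neighboring (a b a' b' : ℕ) : Prop := a ≤ b' + 1 ∧ a' ≤ b + 1

/-- `T[x..y]` is a layer of the pyramid of the neighboring runs
`F = T[a..b]` and `F' = T[a'..b']` (with `a < a'`): a subperiodic run `R`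
with `subper(R) = per(F)` such that `R ∩ (F ∪ F')` is periodic with
period `per(R)`. -/
def IsLayer (T : List α) (a b a' b' x y : ℕ) : Prop :=
  IsRun T x y ∧
  4 * subper (frag T x y) ≤ minPeriod (frag T x y) ∧
  subper (frag T x y) = minPeriod (frag T a b) ∧
  2 * minPeriod (frag T x y) ≤ min y b' + 1 - max x a ∧
  IsPeriodOf (minPeriod (frag T x y)) (frag T (max x a) (min y b'))

/-- A `τ`-synchronizing set of `T` (Kempa–Kociumaka): consistency and density. -/
def SyncSet (T : List α) (τ : ℕ) (S : Set ℕ) : Prop :=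
  (∀ i ∈ S, i + 2 * τ ≤ T.length) ∧
  (∀ i j : ℕ, i + 2 * τ ≤ T.length → j + 2 * τ ≤ T.length →
    (T.drop i).take (2 * τ) = (T.drop j).take (2 * τ) → (i ∈ S ↔ j ∈ S)) ∧
  (∀ i : ℕ, i + 3 * τ - 1 ≤ T.length →
    ((∀ k ∈ S, k < i ∨ i + τ ≤ k) ↔
      3 * minPeriod ((T.drop i).take (3 * τ - 1)) ≤ τ))

/-!
Both runs spell the Lyndon root as a cyclic word `g : ZMod p → Option α`: `T[a..b]` puts `g 0` at
the Lyndon position `ℓ` and `T[a'..b']` at `ℓ' ≡ ℓ + δ (mod p)`. As `p` is the smallest period of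
`T[a..b]`, `g` has no rotational symmetry, so `p` consecutive letter coincidences between the two
runs determine the shift between them modulo `p`. Hence a period `q` bridging the runs satisfies
`q ≡ δ (mod p)`, and conversely each such `q` makes `T[a'-q..b+q]` a `q`-periodic run whose end
mismatches are inherited from the maximality of the two runs. The squares generated by such a
run have a half of length `≥ 2p` inside one of the runs, so `subper = p`. For a layer, a square
realizing `subper = p` must straddle both runs, which forces its period `P ≡ δ (mod p)`, and
maximality then pins the layer's ends at `a' - P` and `b + P`.
-/

def PeriodicOn (T : List α) (m x y : ℕ) : Prop :=
  ∀ i, x ≤ i → i + m ≤ y → T[i]? = T[i + m]?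

namespace PeriodicOn

variable {T : List α} {m x y : ℕ}

theorem mono {x' y' : ℕ} (h : PeriodicOn T m x y) (hx : x ≤ x') (hy : y' ≤ y) :
    PeriodicOn T m x' y' :=
  fun i hi him => h i (hx.trans hi) (him.trans hy)

theorem getElem?_add_mul (h : PeriodicOn T m x y) {i : ℕ} (hi : x ≤ i) :
    ∀ c, i + m * c ≤ y → T[i]? = T[i + m * c]?
  | 0, _ => rfl
  | c + 1, hc => by
    rw [getElem?_add_mul h hi c (by rw [Nat.mul_succ] at hc; omega), h _ (by omega) (by
      rw [Nat.mul_succ] at hc; omega), Nat.add_assoc, ← Nat.mul_succ]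

theorem getElem?_eq_of_modEq (h : PeriodicOn T m x y) {i j : ℕ} (hi : x ≤ i) (hiy : i ≤ y)
    (hj : x ≤ j) (hjy : j ≤ y) (hij : i ≡ j [MOD m]) : T[i]? = T[j]? := by
  wlog hle : i ≤ j generalizing i j
  · exact (this hj hjy hi hiy hij.symm (by omega)).symm
  obtain ⟨c, hc⟩ := (Nat.modEq_iff_dvd' hle).mp hij
  rw [h.getElem?_add_mul hi c (by omega), ← hc, Nat.add_sub_cancel' hle]

end PeriodicOn

theorem minPeriod_isPeriodOf {S : List α} (h : S ≠ []) : IsPeriodOf (minPeriod S) S :=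
  Nat.sInf_mem (s := {p | IsPeriodOf p S})
    ⟨S.length, List.length_pos_iff.mpr h, le_rfl, fun _ hi => by omega⟩

theorem minPeriod_le {S : List α} {m : ℕ} (h : IsPeriodOf m S) : minPeriod S ≤ m :=
  Nat.sInf_le h

theorem isPeriodOf_length_append_self {X : List α} (h : X ≠ []) : IsPeriodOf X.length (X ++ X) := by
  refine ⟨List.length_pos_iff.mpr h, by simp, fun i hi => ?_⟩
  rw [List.length_append] at hi
  rw [List.getElem?_append_left (by omega), List.getElem?_append_right (by omega),
    Nat.add_sub_cancel]

theorem exists_square_of_subper_pos {U : List α} (h : 0 < subper U) :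
    ∃ X : List α, X ≠ [] ∧ (X ++ X) <:+: U ∧ minPeriod (X ++ X) = minPeriod U ∧
      minPeriod X = subper U :=
  Nat.sInf_mem (Nat.nonempty_of_pos_sInf h)

section Frag

variable {T : List α} {x y z m : ℕ}

theorem frag_length (hy : y < T.length) : (frag T x y).length = y + 1 - x := by
  simp only [frag, length_take, length_drop]
  omega

theorem frag_getElem? {i : ℕ} (hi : i < y + 1 - x) : (frag T x y)[i]? = T[x + i]? := by
  rw [frag, getElem?_take_of_lt hi, getElem?_drop]

theorem frag_ne_nil (hxy : x ≤ y) (hy : y < T.length) : frag T x y ≠ [] := by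
  rw [← length_pos_iff, frag_length hy]
  omega

theorem frag_append (hxy : x ≤ y + 1) (hyz : y ≤ z) :
    frag T x z = frag T x y ++ frag T (y + 1) z := by
  simp only [frag]
  rw [show z + 1 - x = (y + 1 - x) + (z - y) by omega, take_add, drop_drop,
    show x + (y + 1 - x) = y + 1 by omega, show z + 1 - (y + 1) = z - y by omega]

theorem frag_prefix (hyz : y ≤ z) : frag T x y <+: frag T x z :=
  take_prefix_take_left (by omega)

theorem exists_frag_eq_of_isInfix {W : List α} (hW : W <:+: frag T x y) (hne : W ≠ []) :
    ∃ s, x ≤ s ∧ s + W.length ≤ y + 1 ∧ frag T s (s + W.length - 1) = W := by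
  obtain ⟨u, v, huv⟩ := hW
  have hlen := congrArg length huv
  simp only [length_append, frag, length_take, length_drop] at hlen
  have hW0 := length_pos_iff.mpr hne
  refine ⟨x + u.length, by omega, by omega, ?_⟩
  have h := congrArg (fun l => (l.drop u.length).take W.length) huv
  simp only [append_assoc, drop_left, take_left, frag, drop_take, drop_drop, take_take] at h
  rw [frag]
  conv_rhs => rw [h]
  congr 1
  omega

theorem exists_frag_eq_of_square_isInfix {X : List α} (hX : X ≠ [])
    (hXX : X ++ X <:+: frag T x y) (hy : y < T.length) :
    ∃ s, x ≤ s ∧ s + 2 * X.length ≤ y + 1 ∧ frag T s (s + 2 * X.length - 1) = X ++ X ∧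
      frag T s (s + X.length - 1) = X ∧ frag T (s + X.length) (s + 2 * X.length - 1) = X := by
  obtain ⟨s, hxs, hsy, hs⟩ := exists_frag_eq_of_isInfix hXX (by simp [hX])
  rw [length_append, ← two_mul] at hsy hs
  have hX0 := length_pos_iff.mpr hX
  refine ⟨s, hxs, hsy, hs, ?_⟩
  rw [frag_append (y := s + X.length - 1) (by omega) (by omega),
    show s + X.length - 1 + 1 = s + X.length by omega] at hs
  exact append_inj hs (by rw [frag_length (by omega)]; omega)

theorem isPeriodOf_frag_iff (hy : y < T.length) :
    IsPeriodOf m (frag T x y) ↔ 0 < m ∧ m ≤ y + 1 - x ∧ PeriodicOn T m x y := by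
  rw [IsPeriodOf, frag_length hy]
  refine and_congr_right fun _ => and_congr_right fun hm =>
    ⟨fun h i hxi hiy => ?_, fun h i hi => ?_⟩
  · have := h (i - x) (by omega)
    rwa [frag_getElem? (by omega), frag_getElem? (by omega), show x + (i - x) = i by omega,
      show x + (i - x + m) = i + m by omega] at this
  · rw [frag_getElem? (by omega), frag_getElem? (by omega), ← Nat.add_assoc]
    exact h _ (by omega) (by omega)

theorem frag_eq_frag_of_periodicOn (h : PeriodicOn T m x (y + m)) :
    frag T (x + m) (y + m) = frag T x y := by
  refine ext_getElem? fun i => ?_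
  by_cases hi : i < y + 1 - x
  · rw [frag_getElem? (by omega), frag_getElem? hi, h (x + i) (by omega) (by omega)]
    congr 1
    omega
  · simp only [frag, getElem?_take, show ¬ i < y + 1 - x from hi,
      show ¬ i < y + m + 1 - (x + m) by omega, if_false]

theorem frag_eq_append_self_of_periodicOn (hm : 0 < m) (h : PeriodicOn T m x (x + 2 * m - 1)) :
    frag T x (x + 2 * m - 1) = frag T x (x + m - 1) ++ frag T x (x + m - 1) := by
  rw [frag_append (y := x + m - 1) (by omega) (by omega), show x + m - 1 + 1 = x + m by omega]
  congr 1
  rw [show x + 2 * m - 1 = x + m - 1 + m by omega]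
  exact frag_eq_frag_of_periodicOn (by rwa [show x + m - 1 + m = x + 2 * m - 1 by omega])

theorem minPeriod_frag_pos (hxy : x ≤ y) (hy : y < T.length) : 0 < minPeriod (frag T x y) :=
  (minPeriod_isPeriodOf (frag_ne_nil hxy hy)).1

theorem periodicOn_minPeriod_frag (hxy : x ≤ y) (hy : y < T.length) :
    PeriodicOn T (minPeriod (frag T x y)) x y :=
  ((isPeriodOf_frag_iff hy).1 (minPeriod_isPeriodOf (frag_ne_nil hxy hy))).2.2

theorem minPeriod_frag_le (hy : y < T.length) (hm : 0 < m) (hlen : m ≤ y + 1 - x)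
    (h : PeriodicOn T m x y) : minPeriod (frag T x y) ≤ m :=
  minPeriod_le ((isPeriodOf_frag_iff hy).2 ⟨hm, hlen, h⟩)

end Frag

/-- Positions are taken modulo `p` through `ZMod p`: on `[x..y]`, `T` spells the cyclic word `g`
with `g 0` at position `o`. -/
def ReadsCyclic {p : ℕ} (T : List α) (g : ZMod p → Option α) (o : ZMod p) (x y : ℕ) : Prop :=
  ∀ i, x ≤ i → i ≤ y → T[i]? = g (i - o)

def CyclicPrimitive {β : Type*} {p : ℕ} (g : ZMod p → β) : Prop :=
  ∀ d, Function.Periodic g d → d = 0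

theorem ZMod.periodic_of_consecutive {β : Type*} {p : ℕ} [NeZero p] {g : ZMod p → β}
    {t d : ZMod p} (h : ∀ j < p, g (t + j + d) = g (t + j)) : Function.Periodic g d := by
  intro z
  have := h (z - t).val (ZMod.val_lt _)
  rwa [ZMod.natCast_zmod_val, add_sub_cancel] at this

theorem PeriodicOn.readsCyclic {T : List α} {p x y ℓ : ℕ} [NeZero p] (h : PeriodicOn T p x y)
    {w : List α} (hℓ : x ≤ ℓ) (hℓy : ℓ + p ≤ y + 1) (hw : ∀ j < p, T[ℓ + j]? = w[j]?) :
    ReadsCyclic T (fun z : ZMod p => w[z.val]?) ℓ x y := by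
  intro i hi hiy
  have hj := ZMod.val_lt ((i : ZMod p) - (ℓ : ZMod p))
  show _ = w[_]?
  rw [← hw _ hj]
  refine h.getElem?_eq_of_modEq hi hiy (by omega) (by omega) ?_
  rw [← ZMod.natCast_eq_natCast_iff, Nat.cast_add, ZMod.natCast_zmod_val, add_sub_cancel]

namespace ReadsCyclic

variable {p : ℕ} {T : List α} {g : ZMod p → Option α} {o o' : ZMod p}
  {x y x' y' m : ℕ}

theorem mono (h : ReadsCyclic T g o x y) (hx : x ≤ x') (hy : y' ≤ y) : ReadsCyclic T g o x' y' :=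
  fun i hi hiy => h i (hx.trans hi) (hiy.trans hy)

theorem periodicOn (h : ReadsCyclic T g o x y) : PeriodicOn T p x y := by
  intro i hi hip
  rw [h i hi (by omega), h (i + p) (by omega) hip, Nat.cast_add, ZMod.natCast_self, add_zero]

theorem sub_eq_sub_of_window [NeZero p] (hg : CyclicPrimitive g) (h : ReadsCyclic T g o x y)
    (h' : ReadsCyclic T g o' x' y') {s t : ℕ} (hs : x ≤ s) (hsy : s + p ≤ y + 1) (ht : x' ≤ t)
    (hty : t + p ≤ y' + 1) (heq : ∀ j < p, T[s + j]? = T[t + j]?) :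
    (t : ZMod p) - o' = (s : ZMod p) - o := by
  refine sub_eq_zero.mp (hg _ (ZMod.periodic_of_consecutive (t := (s : ZMod p) - o) fun j hj => ?_))
  have := heq j hj
  rw [h (s + j) (by omega) (by omega), h' (t + j) (by omega) (by omega)] at this
  push_cast at this
  convert this.symm using 2 <;> ring

theorem dvd_of_periodicOn [NeZero p] (hg : CyclicPrimitive g) (h : ReadsCyclic T g o x y)
    (hm : PeriodicOn T m x y) (hlen : x + m + p ≤ y + 1) : p ∣ m := by
  have := h.sub_eq_sub_of_window hg h (s := x) (t := x + m) le_rfl (by omega) (by omega)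
    (by omega) fun j _ => by rw [hm (x + j) (by omega) (by omega), Nat.add_right_comm]
  rw [← ZMod.natCast_eq_zero_iff]
  push_cast at this
  linear_combination this

theorem minPeriod_frag_eq [NeZero p] (hg : CyclicPrimitive g) (h : ReadsCyclic T g o x y)
    (hlen : 2 * p ≤ y + 1 - x) (hy : y < T.length) : minPeriod (frag T x y) = p := by
  have hp := NeZero.pos p
  have hxy : x ≤ y := by omega
  refine le_antisymm (minPeriod_frag_le hy hp (by omega) h.periodicOn) ?_
  by_contra! hlt
  have hdvd := h.dvd_of_periodicOn hg (periodicOn_minPeriod_frag hxy hy) (by omega)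
  exact (Nat.le_of_dvd (minPeriod_frag_pos hxy hy) hdvd).not_gt hlt

theorem cyclicPrimitive [NeZero p] (h : ReadsCyclic T g o x y) (hmin : minPeriod (frag T x y) = p)
    (hlen : p ≤ y + 1 - x) (hy : y < T.length) : CyclicPrimitive g := by
  intro d hd
  by_contra hd0
  have hd_lt := ZMod.val_lt d
  have hper : PeriodicOn T d.val x y := fun i hi hiy => by
    rw [h i hi (by omega), h _ (by omega) hiy, Nat.cast_add, ZMod.natCast_zmod_val,
      add_sub_right_comm, hd]
  have := minPeriod_frag_le hy (ZMod.val_pos.mpr hd0) (by omega) hper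
  omega

end ReadsCyclic

/-- The runs `F = T[a..b]` and `F' = T[a'..b']` of the pyramid `P(F, F')`, spelling the cyclic
word `g` from the Lyndon positions `ℓ` and `ℓ + δ`. -/
structure RunPair (T : List α) (p : ℕ) (g : ZMod p → Option α) (a b a' b' : ℕ) (ℓ : ZMod p)
    (δ : ℕ) : Prop where
  lt : a < a'
  le_succ : a' ≤ b + 1
  two_mul_le : 2 * p ≤ b + 1 - a
  two_mul_le' : 2 * p ≤ b' + 1 - a'
  lt_length : b < T.length
  lt_length' : b' < T.length
  reads : ReadsCyclic T g ℓ a b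
  reads' : ReadsCyclic T g (ℓ + δ) a' b'
  primitive : CyclicPrimitive g
  right_maximal : b = T.length - 1 ∨ T[b + 1]? ≠ T[b + 1 - p]?
  left_maximal' : T[a' - 1]? ≠ T[a' - 1 + p]?

theorem RunPair.of_isRun {T lam : List α} {p a b a' b' ℓ ℓ' δ : ℕ} [NeZero p]
    (h₁ : IsRun T a b) (h₂ : IsRun T a' b') (hp₁ : minPeriod (frag T a b) = p)
    (hp₂ : minPeriod (frag T a' b') = p) (hlt : a < a') (hle : a' ≤ b + 1)
    (hℓ : a ≤ ℓ) (hℓb : ℓ + p ≤ b + 1) (hlam : frag T ℓ (ℓ + p - 1) = lam)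
    (hℓ' : a' ≤ ℓ') (hℓb' : ℓ' + p ≤ b' + 1) (hlam' : frag T ℓ' (ℓ' + p - 1) = lam)
    (hδ : (ℓ' : ZMod p) = ℓ + δ) :
    RunPair T p (fun z => lam[z.val]?) a b a' b' ℓ δ := by
  obtain ⟨hab, hbT, hlen, -, hmax⟩ := h₁
  obtain ⟨hab', hbT', hlen', hmax', -⟩ := h₂
  rw [hp₁] at hlen hmax
  rw [hp₂] at hlen' hmax'
  have hp := NeZero.pos p
  have hreads : ReadsCyclic T (fun z => lam[z.val]?) (ℓ : ZMod p) a b := by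
    refine (hp₁ ▸ periodicOn_minPeriod_frag hab hbT).readsCyclic hℓ hℓb fun j hj => ?_
    rw [← hlam, frag_getElem? (by omega)]
  have hreads' : ReadsCyclic T (fun z => lam[z.val]?) (ℓ' : ZMod p) a' b' := by
    refine (hp₂ ▸ periodicOn_minPeriod_frag hab' hbT').readsCyclic hℓ' hℓb' fun j hj => ?_
    rw [← hlam', frag_getElem? (by omega)]
  exact ⟨hlt, hle, hlen, hlen', hbT, hbT', hreads, hδ ▸ hreads',
    hreads.cyclicPrimitive hp₁ (by omega) hbT, hmax, hmax'.resolve_left (by omega)⟩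

namespace RunPair

variable {T : List α} {p : ℕ} {g : ZMod p → Option α} {a b a' b' : ℕ} {ℓ : ZMod p} {δ : ℕ}
  {i j s t x y q P : ℕ}

theorem getElem?_succ_ne (h : RunPair T p g a b a' b' ℓ δ) (hb : b + 1 < T.length) :
    T[b + 1]? ≠ T[b + 1 - p]? :=
  h.right_maximal.resolve_left (by omega)

theorem getElem?_eq_left (h : RunPair T p g a b a' b' ℓ δ) (hi : a ≤ i) (hib : i ≤ b)
    (hj : a ≤ j) (hjb : j ≤ b) (hij : (i : ZMod p) = j) : T[i]? = T[j]? := by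
  rw [h.reads i hi hib, h.reads j hj hjb, hij]

theorem getElem?_eq_cross (h : RunPair T p g a b a' b' ℓ δ) (hi : a ≤ i) (hib : i ≤ b)
    (hj : a' ≤ j) (hjb : j ≤ b') (hij : (j : ZMod p) = i + δ) : T[i]? = T[j]? := by
  rw [h.reads i hi hib, h.reads' j hj hjb, hij]
  congr 1
  ring

theorem cast_eq_of_window (h : RunPair T p g a b a' b' ℓ δ) [NeZero p] (hs : a ≤ s)
    (hsb : s + p ≤ b + 1) (ht : a' ≤ t) (htb : t + p ≤ b' + 1)
    (heq : ∀ j < p, T[s + j]? = T[t + j]?) : (t : ZMod p) = s + δ := by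
  have := h.reads.sub_eq_sub_of_window h.primitive h.reads' hs hsb ht htb heq
  linear_combination this

theorem minPeriod_frag_eq_left (h : RunPair T p g a b a' b' ℓ δ) [NeZero p] (hx : a ≤ x)
    (hy : y ≤ b) (hlen : 2 * p ≤ y + 1 - x) : minPeriod (frag T x y) = p :=
  (h.reads.mono hx hy).minPeriod_frag_eq h.primitive hlen (by have := h.lt_length; omega)

theorem minPeriod_frag_eq_right (h : RunPair T p g a b a' b' ℓ δ) [NeZero p] (hx : a' ≤ x)
    (hy : y ≤ b') (hlen : 2 * p ≤ y + 1 - x) : minPeriod (frag T x y) = p :=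
  (h.reads'.mono hx hy).minPeriod_frag_eq h.primitive hlen (by have := h.lt_length'; omega)

theorem cast_ne_zero (h : RunPair T p g a b a' b' ℓ δ) [NeZero p] : (δ : ZMod p) ≠ 0 := by
  intro hδ
  have := NeZero.pos p
  have := h.lt
  have := h.le_succ
  have := h.two_mul_le'
  refine h.left_maximal' (h.getElem?_eq_cross (i := a' - 1) (j := a' - 1 + p) (by omega)
    (by omega) (by omega) (by omega) ?_)
  simp [hδ]

theorem succ_le_add (h : RunPair T p g a b a' b' ℓ δ) [NeZero p] : b + 2 ≤ a' + p := by
  by_contra! hlt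
  have := NeZero.pos p
  have := h.two_mul_le
  have := h.two_mul_le'
  refine h.cast_ne_zero ?_
  have := h.cast_eq_of_window (s := a') (t := a') h.lt.le (by omega) le_rfl (by omega)
    fun _ _ => rfl
  linear_combination -this

theorem periodicOn_of_cast_eq (h : RunPair T p g a b a' b' ℓ δ) (hq : (q : ZMod p) = δ)
    (hax : a ≤ x) (hxq : a' ≤ x + q) (hyq : y ≤ b + q) (hyb : y ≤ b') : PeriodicOn T q x y :=
  fun i hi hiq => h.getElem?_eq_cross (by omega) (by omega) (by omega) (by omega)
    (by rw [Nat.cast_add, hq])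

theorem minPeriod_frag_eq_of_cast_eq (h : RunPair T p g a b a' b' ℓ δ) [NeZero p]
    (hq : (q : ZMod p) = δ) (hpq : 2 * p ≤ q) (hax : a ≤ x) (hxq : x + q = a') (hby : b < y)
    (hy : a' + p ≤ y + 1) (hyq : y ≤ b + q) (hyb : y ≤ b') : minPeriod (frag T x y) = q := by
  have hp := NeZero.pos p
  have := h.le_succ
  have hyT : y < T.length := by have := h.lt_length'; omega
  refine le_antisymm (minPeriod_frag_le hyT (by omega) (by omega)
    (h.periodicOn_of_cast_eq hq hax hxq.ge hyq hyb)) ?_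
  by_contra! hrq
  set r := minPeriod (frag T x y)
  have hr := minPeriod_frag_pos (x := x) (by omega) hyT
  have hper : PeriodicOn T r x y := periodicOn_minPeriod_frag (by omega) hyT
  rcases le_or_gt (r + p) q with hrp | hrp
  · -- a period divisible by `p` would extend `T[a..b]` to position `b + 1`
    obtain ⟨c, hc⟩ : p ∣ r := (h.reads.mono hax (y' := x + r + p - 1) (by omega)).dvd_of_periodicOn
      h.primitive (hper.mono le_rfl (by omega)) (by omega)
    have hshift : T[b + 1 - r]? = T[b + 1]? := by
      rw [hper _ (by omega) (by omega), Nat.sub_add_cancel (by omega)]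
    refine h.getElem?_succ_ne (by omega) (hshift.symm.trans (h.getElem?_eq_left (i := b + 1 - r)
      (j := b + 1 - p) (by omega) (by omega) (by omega) (by omega) ?_))
    rw [Nat.cast_sub (by omega), Nat.cast_sub (by omega), hc]
    simp
  · have hwin := h.cast_eq_of_window (s := a' - r) (t := a') (by omega) (by omega) le_rfl
      (by omega) fun j _ => by rw [hper _ (by omega) (by omega)]; congr 1; omega
    rw [Nat.cast_sub (by omega), ← hq] at hwin
    have hmod : r ≡ q [MOD p] := (ZMod.natCast_eq_natCast_iff _ _ _).mp
      (by linear_combination hwin)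
    have := Nat.le_of_dvd (by omega) ((Nat.modEq_iff_dvd' hrq.le).mp hmod)
    omega

theorem getElem?_pred_ne (h : RunPair T p g a b a' b' ℓ δ) [NeZero p] (hq : (q : ZMod p) = δ)
    (hax : a < x) (hxq : x + q = a') : T[x - 1]? ≠ T[x - 1 + q]? := by
  have := NeZero.pos p
  have := h.two_mul_le'
  have := h.le_succ
  intro heq
  refine h.left_maximal' ?_
  rw [show T[a' - 1]? = T[x - 1]? by rw [heq]; congr 1; omega]
  refine (h.getElem?_eq_cross (i := x - 1) (j := a' - 1 + p) (by omega) (by omega) (by omega)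
    (by omega) ?_)
  rw [show a' - 1 + p = x - 1 + q + p by omega]
  simp [hq]

theorem getElem?_add_succ_ne (h : RunPair T p g a b a' b' ℓ δ) [NeZero p]
    (hq : (q : ZMod p) = δ) (hb : b + q < b') : T[b + q + 1]? ≠ T[b + 1]? := by
  have := NeZero.pos p
  have := h.two_mul_le
  have := h.lt_length'
  have := h.le_succ
  intro heq
  refine h.getElem?_succ_ne (by omega) (heq.symm.trans (h.getElem?_eq_cross (i := b + 1 - p)
    (j := b + q + 1) (by omega) (by omega) (by omega) (by omega) ?_).symm)
  rw [show b + q + 1 = b + 1 - p + p + q by omega]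
  simp [hq]

theorem minPeriod_eq_of_square (h : RunPair T p g a b a' b' ℓ δ) [NeZero p] {X : List α}
    {L : ℕ} (hs : a ≤ s) (hsL : s + 2 * L ≤ b' + 1) (hL : 2 * p ≤ L)
    (hX : frag T s (s + L - 1) = X) (hX' : frag T (s + L) (s + 2 * L - 1) = X) :
    minPeriod X = p := by
  have := h.le_succ
  by_cases hsb : s + L ≤ b + 1
  · exact hX ▸ h.minPeriod_frag_eq_left hs (by omega) (by omega)
  · exact hX' ▸ h.minPeriod_frag_eq_right (by omega) (by omega) (by omega)

theorem subper_eq (h : RunPair T p g a b a' b' ℓ δ) [NeZero p] (hq : (q : ZMod p) = δ)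
    (hpq : 2 * p ≤ q) (hax : a ≤ x) (hxq : x + q = a') (hb : b + q < b') :
    subper (frag T x (b + q)) = p := by
  have := h.le_succ
  have := h.succ_le_add
  have hyT : b + q < T.length := by have := h.lt_length'; omega
  have hminR : minPeriod (frag T x (b + q)) = q :=
    h.minPeriod_frag_eq_of_cast_eq hq hpq hax hxq (by omega) (by omega) le_rfl hb.le
  set X := frag T x (a' - 1)
  have hXX : X ++ X = frag T x (a' + q - 1) := by
    have := frag_eq_append_self_of_periodicOn (T := T) (x := x) (m := q) (by omega)
      (h.periodicOn_of_cast_eq hq hax (by omega) (by omega) (by omega))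
    rw [show x + 2 * q - 1 = a' + q - 1 by omega, show x + q - 1 = a' - 1 by omega] at this
    exact this.symm
  have hwitness : p ∈ {m | ∃ X : List α, X ≠ [] ∧ (X ++ X) <:+: frag T x (b + q) ∧
      minPeriod (X ++ X) = minPeriod (frag T x (b + q)) ∧ minPeriod X = m} := by
    refine ⟨X, frag_ne_nil (by omega) (by omega), ?_, ?_, ?_⟩
    · exact hXX ▸ (frag_prefix (by omega)).isInfix
    · rw [hXX, hminR]
      exact h.minPeriod_frag_eq_of_cast_eq hq hpq hax hxq (by omega) (by omega) (by omega)
        (by omega)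
    · exact h.minPeriod_frag_eq_left hax (by omega) (by omega)
  refine le_antisymm (Nat.sInf_le hwitness) (le_csInf ⟨p, hwitness⟩ ?_)
  rintro _ ⟨Y, hY, hYY, hminYY, rfl⟩
  obtain ⟨s, hxs, hsy, hs, hs₁, hs₂⟩ := exists_frag_eq_of_square_isInfix hY hYY hyT
  have hqL : q ≤ Y.length := hminR ▸ hminYY ▸ minPeriod_le (isPeriodOf_length_append_self hY)
  exact (h.minPeriod_eq_of_square (by omega) (by omega) (by omega) hs₁ hs₂).ge

theorem isLayer (h : RunPair T p g a b a' b' ℓ δ) [NeZero p] (hq : (q : ZMod p) = δ)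
    (hpq : 4 * p ≤ q) (ha : a + q < a') (hb : b + q < b') :
    IsLayer T a b a' b' (a' - q) (b + q) := by
  have := NeZero.pos p
  have := h.le_succ
  have hyT : b + q < T.length := by have := h.lt_length'; omega
  have hminR : minPeriod (frag T (a' - q) (b + q)) = q :=
    h.minPeriod_frag_eq_of_cast_eq hq (by omega) (by omega) (by omega) (by omega) (by omega)
      le_rfl hb.le
  have hsub := h.subper_eq hq (by omega) (x := a' - q) (by omega) (by omega) hb
  have hmin : min (b + q) b' = b + q := min_eq_left hb.le
  have hmax : max (a' - q) a = a' - q := max_eq_left (by omega)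
  refine ⟨⟨by omega, hyT, ?_, Or.inr ?_, Or.inr ?_⟩, ?_, ?_, ?_, ?_⟩
  · rw [hminR]
    omega
  · rw [hminR]
    exact h.getElem?_pred_ne hq (by omega) (by omega)
  · rw [hminR, show b + q + 1 - q = b + 1 by omega]
    exact h.getElem?_add_succ_ne hq hb
  · rwa [hsub, hminR]
  · rw [hsub, h.minPeriod_frag_eq_left le_rfl le_rfl (by have := h.two_mul_le; omega)]
  · rw [hmin, hmax, hminR]
    omega
  · rw [hmin, hmax, hminR, isPeriodOf_frag_iff hyT]
    exact ⟨by omega, by omega, h.periodicOn_of_cast_eq hq (by omega) (by omega) le_rfl hb.le⟩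

theorem lt_and_lt_of_lt_minPeriod (h : RunPair T p g a b a' b' ℓ δ) [NeZero p] (hax : a ≤ x)
    (hyb : y ≤ b') (hlen : 2 * p ≤ y + 1 - x) (hP : p < minPeriod (frag T x y)) :
    x < a' ∧ b < y := by
  constructor
  · by_contra! hx
    exact hP.ne' (h.minPeriod_frag_eq_right hx hyb hlen)
  · by_contra! hy
    exact hP.ne' (h.minPeriod_frag_eq_left hax hy hlen)

theorem le_or_le_of_periodicOn (h : RunPair T p g a b a' b' ℓ δ) {u v : ℕ}
    (hper : PeriodicOn T p u v) (huv : u + 2 * p ≤ v + 1) (hv : v ≤ b') : v ≤ b ∨ a' ≤ u := by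
  have := h.le_succ
  have := h.lt_length'
  by_contra! hc
  rcases le_or_gt (u + p) (b + 1) with hup | hup
  · refine h.getElem?_succ_ne (by omega) ?_
    rw [hper (b + 1 - p) (by omega) (by omega), Nat.sub_add_cancel (by omega)]
  · exact h.left_maximal' (hper (a' - 1) (by omega) (by omega))

theorem cast_minPeriod_eq (h : RunPair T p g a b a' b' ℓ δ) [NeZero p] (hax : a < x)
    (hyb : y ≤ b') (hsub : subper (frag T x y) = p)
    (hP : 4 * p ≤ minPeriod (frag T x y)) : (minPeriod (frag T x y) : ZMod p) = δ := by
  have := NeZero.pos p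
  have hyT : y < T.length := by have := h.lt_length'; omega
  obtain ⟨X, hX, hXX, hminXX, hminX⟩ := exists_square_of_subper_pos (hsub ▸ NeZero.pos p)
  obtain ⟨s, hxs, hsy, hs, hs₁, hs₂⟩ := exists_frag_eq_of_square_isInfix hX hXX hyT
  set P := minPeriod (frag T x y)
  set L := X.length
  have hPL : P ≤ L := hminXX ▸ minPeriod_le (isPeriodOf_length_append_self hX)
  have hper₁ : PeriodicOn T p s (s + L - 1) := by
    have := periodicOn_minPeriod_frag (T := T) (x := s) (y := s + L - 1) (by omega) (by omega)
    rwa [hs₁, hminX, hsub] at this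
  have hper₂ : PeriodicOn T p (s + L) (s + 2 * L - 1) := by
    have := periodicOn_minPeriod_frag (T := T) (x := s + L) (y := s + 2 * L - 1) (by omega)
      (by omega)
    rwa [hs₂, hminX, hsub] at this
  have hperP : PeriodicOn T P s (s + 2 * L - 1) := by
    have := periodicOn_minPeriod_frag (T := T) (x := s) (y := s + 2 * L - 1) (by omega) (by omega)
    rwa [hs, hminXX] at this
  -- the square is not `p`-periodic, so it lies inside neither run
  have hsq : minPeriod (frag T s (s + 2 * L - 1)) ≠ p := by
    rw [hs, hminXX]
    omega
  have h₁ : s + L - 1 ≤ b := (h.le_or_le_of_periodicOn hper₁ (by omega) (by omega)).resolve_right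
    fun hs' => hsq (h.minPeriod_frag_eq_right hs' (by omega) (by omega))
  have h₂ : a' ≤ s + L := (h.le_or_le_of_periodicOn hper₂ (by omega) (by omega)).resolve_left
    fun hs' => hsq (h.minPeriod_frag_eq_left (by omega) hs' (by omega))
  have hwin := h.cast_eq_of_window (s := s + L - P) (t := s + L) (by omega) (by omega) h₂
    (by omega) fun j _ => by rw [hperP _ (by omega) (by omega)]; congr 1; omega
  rw [Nat.cast_sub (by omega)] at hwin
  linear_combination hwin

theorem add_eq_of_periodicOn (h : RunPair T p g a b a' b' ℓ δ) [NeZero p]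
    (hP : (P : ZMod p) = δ) (hper : PeriodicOn T P x y) (hax : a < x) (hxa' : x < a')
    (hby : b < y) (hyb : y ≤ b') (hlen : 2 * P ≤ y + 1 - x) (hmax : T[x - 1]? ≠ T[x - 1 + P]?) :
    x + P = a' := by
  have := NeZero.pos p
  have := h.le_succ
  have := h.two_mul_le'
  rcases lt_trichotomy (x + P) a' with hlt | heq | hgt
  · refine absurd ?_ h.left_maximal'
    calc T[a' - 1]? = T[a' - 1 - P]? := by
          rw [hper (a' - 1 - P) (by omega) (by omega), Nat.sub_add_cancel (by omega)]
      _ = T[a' - 1 + p]? := by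
          refine h.getElem?_eq_cross (by omega) (by omega) (by omega) (by omega) ?_
          rw [show a' - 1 + p = a' - 1 - P + P + p by omega]
          simp [hP]
  · exact heq
  · exact absurd (h.getElem?_eq_cross (i := x - 1) (j := x - 1 + P) (by omega) (by omega)
      (by omega) (by omega) (by rw [Nat.cast_add, hP])) hmax

theorem eq_add_of_periodicOn (h : RunPair T p g a b a' b' ℓ δ) [NeZero p]
    (hP : (P : ZMod p) = δ) (hper : PeriodicOn T P x y) (hax : a < x) (hxa' : x < a')
    (hby : b < y) (hyb : y < b') (hlen : 2 * P ≤ y + 1 - x)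
    (hmax : T[y + 1]? ≠ T[y + 1 - P]?) : y = b + P := by
  have := NeZero.pos p
  have := h.le_succ
  have := h.two_mul_le
  have := h.lt_length'
  rcases lt_trichotomy y (b + P) with hlt | heq | hgt
  · refine absurd (h.getElem?_eq_cross (i := y + 1 - P) (j := y + 1) (by omega) (by omega)
      (by omega) (by omega) ?_).symm hmax
    rw [Nat.cast_sub (by omega), hP]
    ring
  · exact heq
  · refine absurd ?_ (h.getElem?_succ_ne (by omega))
    calc T[b + 1]? = T[b + 1 + P]? := hper _ (by omega) (by omega)
      _ = T[b + 1 - p]? := by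
          refine (h.getElem?_eq_cross (by omega) (by omega) (by omega) (by omega) ?_).symm
          rw [Nat.cast_sub (by omega), ZMod.natCast_self, sub_zero, Nat.cast_add, hP]

theorem eq_of_isLayer (h : RunPair T p g a b a' b' ℓ δ) [NeZero p]
    (hL : IsLayer T a b a' b' x y) (hax : a < x) (hyb : y < b') :
    (minPeriod (frag T x y) : ZMod p) = δ ∧ 4 * p ≤ minPeriod (frag T x y) ∧
      x + minPeriod (frag T x y) = a' ∧ y = b + minPeriod (frag T x y) := by
  obtain ⟨⟨hxy, hyT, hlen, hmaxL, hmaxR⟩, h4, hsub, -, -⟩ := hL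
  rw [h.minPeriod_frag_eq_left le_rfl le_rfl (by have := h.two_mul_le; omega)] at hsub
  rw [hsub] at h4
  have := NeZero.pos p
  have := h.lt_length'
  obtain ⟨hxa', hby⟩ := h.lt_and_lt_of_lt_minPeriod hax.le hyb.le (by omega) (by omega)
  have hP := h.cast_minPeriod_eq hax hyb.le hsub h4
  have hper := periodicOn_minPeriod_frag hxy hyT
  exact ⟨hP, h4, h.add_eq_of_periodicOn hP hper hax hxa' hby hyb.le hlen
    (hmaxL.resolve_left (by omega)), h.eq_add_of_periodicOn hP hper hax hxa' hby hyb hlen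
    (hmaxR.resolve_left (by omega))⟩

end RunPair

theorem exists_eq_mul_add_of_natCast_eq {P p δ n : ℕ} (h : (P : ZMod p) = δ) (hδ : δ < p)
    (hP : n * p ≤ P) : ∃ k, n ≤ k ∧ P = k * p + δ := by
  have hmod := (ZMod.natCast_eq_natCast_iff' P δ p).mp h
  rw [Nat.mod_eq_of_lt hδ] at hmod
  refine ⟨P / p, (Nat.le_div_iff_mul_le (by omega)).mpr hP, ?_⟩
  rw [← hmod, Nat.div_add_mod']

theorem layers_characterization_general (T : List α)
    (a b a' b' p ℓ ℓ' δ : ℕ) (lam : List α)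
    (hab : a < a')
    (h1 : IsRun T a b) (h2 : IsRun T a' b')
    (hnb : Neighboring a b a' b')
    (hp1 : minPeriod (frag T a b) = p) (hp2 : minPeriod (frag T a' b') = p)
    (hℓ : a ≤ ℓ ∧ ℓ < a + p ∧ frag T ℓ (ℓ + p - 1) = lam)
    (hℓ' : a' ≤ ℓ' ∧ ℓ' < a' + p ∧ frag T ℓ' (ℓ' + p - 1) = lam)
    (hδ : δ < p ∧ (ℓ + δ) % p = ℓ' % p) :
    ({xy : ℕ × ℕ | IsLayer T a b a' b' xy.1 xy.2 ∧ a < xy.1 ∧ xy.2 < b'} =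
      {xy : ℕ × ℕ | ∃ k : ℕ, 4 ≤ k ∧ a + (k * p + δ) < a' ∧ b + (k * p + δ) < b' ∧
        xy = (a' - (k * p + δ), b + (k * p + δ))}) ∧
    (∀ k : ℕ, 4 ≤ k → a + (k * p + δ) < a' → b + (k * p + δ) < b' →
      minPeriod (frag T (a' - (k * p + δ)) (b + (k * p + δ))) = k * p + δ) := by
  have hp : 0 < p := hp1 ▸ minPeriod_frag_pos h1.1 h1.2.1
  have : NeZero p := ⟨hp.ne'⟩
  have : 2 * p ≤ b + 1 - a := hp1 ▸ h1.2.2.1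
  have : 2 * p ≤ b' + 1 - a' := hp2 ▸ h2.2.2.1
  have h := RunPair.of_isRun h1 h2 hp1 hp2 hab hnb.2 hℓ.1 (by omega) hℓ.2.2 hℓ'.1 (by omega)
    hℓ'.2.2 (by rw [← Nat.cast_add, ZMod.natCast_eq_natCast_iff']; exact hδ.2.symm)
  have hcast (k : ℕ) : ((k * p + δ : ℕ) : ZMod p) = δ := by simp
  have := hnb.2
  refine ⟨Set.ext fun ⟨x, y⟩ => ⟨fun ⟨hL, hax, hyb⟩ => ?_, fun ⟨k, hk, ha, hb, hxy⟩ => ?_⟩,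
    fun k hk ha hb => ?_⟩
  · dsimp only at hL hax hyb
    obtain ⟨hP, h4, hx, hy⟩ := h.eq_of_isLayer hL hax hyb
    obtain ⟨k, hk, hPk⟩ := exists_eq_mul_add_of_natCast_eq hP hδ.1 h4
    exact ⟨k, hk, by omega, by omega, by rw [Prod.mk.injEq]; omega⟩
  · obtain ⟨rfl, rfl⟩ := Prod.mk.inj hxy
    have := Nat.mul_le_mul_right p hk
    exact ⟨h.isLayer (hcast k) (by omega) ha hb, by omega, by omega⟩
  · have := Nat.mul_le_mul_right p hk
    exact h.minPeriod_frag_eq_of_cast_eq (hcast k) (by omega) (by omega) (by omega) (by omega)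
      (by omega) le_rfl hb.le

/-- Characterization of the layers of a pyramid strictly inside `(a..b')`. -/
theorem layers_characterization [LinearOrder α] (T : List α)
    (a b a' b' p ℓ ℓ' δ : ℕ) (lam : List α)
    (hab : a < a')
    (h1 : IsRun T a b) (h2 : IsRun T a' b')
    (hnb : Neighboring a b a' b')
    (hp1 : minPeriod (frag T a b) = p) (hp2 : minPeriod (frag T a' b') = p)
    (hlam1 : LyndonRootOf (frag T a b) lam)
    (hlam2 : LyndonRootOf (frag T a' b') lam)
    (hℓ : a ≤ ℓ ∧ ℓ < a + p ∧ frag T ℓ (ℓ + p - 1) = lam)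
    (hℓ' : a' ≤ ℓ' ∧ ℓ' < a' + p ∧ frag T ℓ' (ℓ' + p - 1) = lam)
    (hδ : δ < p ∧ (ℓ + δ) % p = ℓ' % p) :
    ({xy : ℕ × ℕ | IsLayer T a b a' b' xy.1 xy.2 ∧ a < xy.1 ∧ xy.2 < b'} =
      {xy : ℕ × ℕ | ∃ k : ℕ, 4 ≤ k ∧ a + (k * p + δ) < a' ∧ b + (k * p + δ) < b' ∧
        xy = (a' - (k * p + δ), b + (k * p + δ))}) ∧
    (∀ k : ℕ, 4 ≤ k → a + (k * p + δ) < a' → b + (k * p + δ) < b' →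
      minPeriod (frag T (a' - (k * p + δ)) (b + (k * p + δ))) = k * p + δ) :=
  layers_characterization_general T a b a' b' p ℓ ℓ' δ lam hab h1 h2 hnb hp1 hp2 hℓ hℓ' hδ
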